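/- arXiv:1903.08214 — 3 statements merged into one kernel-verified Lean document; each statement's English description precedes it below -/
import Mathlib

section
/- Define W(b,d) = max{W(f) : bs(f) ≤ b, deg(f) = d} (and W(b,d)=0 if no such f exists). Then for all b,d ≥ 1 with the class nonempty, W(b,d) ≤ max over ℓ ∈ {1,…,b} and k ∈ {1,…,d} of ( ℓ·d·2^{−d} + W(b−ℓ, d−k) ). -/
open MvPolynomial Finset
open scoped Classical

/-- `bval` converts a boolean to the real number 0 or 1. -/
def bval (x : Bool) : ℝ := if x then 1 else 0

/-- `Represents P f` : `P` is the multilinear real polynomial representing the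
Boolean function `f : {0,1}^n → {0,1}`. -/
def Represents {n : ℕ} (P : MvPolynomial (Fin n) ℝ) (f : (Fin n → Bool) → Bool) : Prop :=
  (∀ m ∈ P.support, ∀ i, m i ≤ 1) ∧
  ∀ x : Fin n → Bool, MvPolynomial.eval (fun i => bval (x i)) P = bval (f x)

/-- Flip the `i`-th bit of `x`. -/
def flip1 {n : ℕ} (x : Fin n → Bool) (i : Fin n) : Fin n → Bool :=
  Function.update x i (!(x i))

/-- Coordinate `i` is relevant for `f`. -/
def Relevant {n : ℕ} (f : (Fin n → Bool) → Bool) (i : Fin n) : Prop :=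
  ∃ x, f (flip1 x i) ≠ f x

/-- The set of relevant coordinates of `f`. -/
noncomputable def relSet {n : ℕ} (f : (Fin n → Bool) → Bool) : Finset (Fin n) :=
  Finset.univ.filter fun i => Relevant f i

/-- The influence of coordinate `i` on `f`. -/
noncomputable def influence {n : ℕ} (f : (Fin n → Bool) → Bool) (i : Fin n) : ℝ :=
  ((Finset.univ.filter fun x => f (flip1 x i) ≠ f x).card : ℝ) / 2 ^ n

/-- `degI P i` : the maximal degree of a monomial of `P` containing `x i`. -/
noncomputable def degI {n : ℕ} (P : MvPolynomial (Fin n) ℝ) (i : Fin n) : ℕ :=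
  (P.support.filter fun m => m i ≠ 0).sup fun m => m.sum fun _ e => e

/-- `W P f = Σ_{i ∈ R(f)} 2^{-deg_i(f)}`, computed via the representing polynomial `P`. -/
noncomputable def W {n : ℕ} (P : MvPolynomial (Fin n) ℝ) (f : (Fin n → Bool) → Bool) : ℝ :=
  ∑ i ∈ relSet f, ((2:ℝ) ^ degI P i)⁻¹

/-- Flip the bits of `x` in the block `B`. -/
def flipB {n : ℕ} (x : Fin n → Bool) (B : Finset (Fin n)) : Fin n → Bool :=
  fun j => if j ∈ B then !(x j) else x j

/-- `f` has `b` pairwise disjoint sensitive blocks at some input. -/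
def HasSensBlocks {n : ℕ} (f : (Fin n → Bool) → Bool) (b : ℕ) : Prop :=
  ∃ (x : Fin n → Bool) (B : Fin b → Finset (Fin n)),
    (∀ j k, j ≠ k → Disjoint (B j) (B k)) ∧ ∀ j, f (flipB x (B j)) ≠ f x

/-- The block sensitivity of `f`. -/
noncomputable def bs {n : ℕ} (f : (Fin n → Bool) → Bool) : ℕ :=
  sSup {b | HasSensBlocks f b}

/-- Restriction of `f` fixing the coordinates in `H` according to `α`. -/
def restrict {n : ℕ} (f : (Fin n → Bool) → Bool) (H : Finset (Fin n)) (α : Fin n → Bool) :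
    (Fin n → Bool) → Bool :=
  fun x => f fun i => if i ∈ H then α i else x i

/-- The multilinear monomial (exponent vector) with support `S`. -/
noncomputable def monOf {n : ℕ} (S : Finset (Fin n)) : Fin n →₀ ℕ :=
  ∑ j ∈ S, Finsupp.single j 1

/-!
Write `f` as a multilinear polynomial `c` of degree `d`, take a maximal family `F` of pairwise
disjoint monomials of degree `d`, put `ℓ = #F`, and let `H` be the set of variables they cover.
Every monomial of degree `d` meets `H`, so each restriction `f_α` of `f` fixing the variables in
`H` to `α` has degree at most `d - 1`. Fixing all variables outside a top monomial leaves a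
nonconstant function, so at every input each member of `F` contains a sensitive block; together
with the sensitive blocks of `f_α` these give `bs f_α + ℓ ≤ bs f`.

The variables in `H` contribute at most `ℓ d 2^{-d}` to `W f`. For a relevant `i ∉ H`, choose,
over all restrictions, a longest monomial `S ∋ i`, of length `s`. The coefficient of `x^S` in `f_α`
is a nonzero multilinear polynomial in `α` of degree at most `deg_i f - s`, so by Schwartz–Zippel
on the Boolean cube it is nonzero for at least a `2^{s - deg_i f}` fraction of all `α`, and for
those `2^{-deg_i f_α} ≥ 2^{-s}`. Hence `2^{-deg_i f} ≤ 𝔼_α 2^{-deg_i f_α}`, counting only the `α`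
for which `i` is relevant to `f_α`, and summing over `i` bounds the rest of `W f` by
`𝔼_α W f_α ≤ U`.
-/

open scoped BigOperators

theorem Finset.exists_maximal_pairwiseDisjoint_subset {α : Type*} [DecidableEq α]
    (𝒯 : Finset (Finset α)) :
    ∃ ℱ ⊆ 𝒯, (ℱ : Set (Finset α)).PairwiseDisjoint id ∧
      ∀ S ∈ 𝒯, S.Nonempty → ∃ T ∈ ℱ, ¬Disjoint S T := by
  obtain ⟨ℱ, hℱ, hmax⟩ := Finset.exists_max_image
    (𝒯.powerset.filter fun ℱ : Finset (Finset α) => (ℱ : Set (Finset α)).PairwiseDisjoint id)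
    Finset.card ⟨∅, by simp⟩
  simp only [Finset.mem_filter, Finset.mem_powerset] at hℱ hmax
  refine ⟨ℱ, hℱ.1, hℱ.2, fun S hS hne => ?_⟩
  by_contra! hdisj
  have hSℱ : S ∉ ℱ := fun h => hne.ne_empty ((Finset.disjoint_self_iff_empty S).1 (hdisj S h))
  have := hmax (insert S ℱ) ⟨Finset.insert_subset hS hℱ.1, by
    rw [Finset.coe_insert]
    exact hℱ.2.insert fun T hT _ => hdisj T hT⟩
  rw [Finset.card_insert_of_notMem hSℱ] at this
  omega

section BlockSensitivity

variable {n : ℕ} {f : (Fin n → Bool) → Bool}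

theorem HasSensBlocks.le_card {b : ℕ} (h : HasSensBlocks f b) : b ≤ n := by
  obtain ⟨x, B, hdisj, hsens⟩ := h
  have hne : ∀ j, (B j).Nonempty := fun j => Finset.nonempty_iff_ne_empty.2 fun hB =>
    hsens j (congrArg f (funext fun i => by simp [flipB, hB]))
  calc b = ∑ _j : Fin b, 1 := by simp
    _ ≤ ∑ j, #(B j) := Finset.sum_le_sum fun j _ => (hne j).card_pos
    _ = #(univ.biUnion B) := (Finset.card_biUnion fun j _ k _ hjk => hdisj j k hjk).symm
    _ ≤ n := (Finset.card_le_univ _).trans (by simp)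

theorem le_bs {b : ℕ} (h : HasSensBlocks f b) : b ≤ bs f :=
  le_csSup ⟨n, fun _ => HasSensBlocks.le_card⟩ h

theorem hasSensBlocks_bs (f : (Fin n → Bool) → Bool) : HasSensBlocks f (bs f) :=
  Nat.sSup_mem ⟨0, (⟨fun _ => false, Fin.elim0, fun j => j.elim0, fun j => j.elim0⟩ :
    HasSensBlocks f 0)⟩ ⟨n, fun _ => HasSensBlocks.le_card⟩

theorem hasSensBlocks_add {x : Fin n → Bool} {s t : ℕ} {B : Fin s → Finset (Fin n)}
    {C : Fin t → Finset (Fin n)} (hB : ∀ j k, j ≠ k → Disjoint (B j) (B k))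
    (hC : ∀ j k, j ≠ k → Disjoint (C j) (C k)) (hBC : ∀ j k, Disjoint (B j) (C k))
    (hfB : ∀ j, f (flipB x (B j)) ≠ f x) (hfC : ∀ k, f (flipB x (C k)) ≠ f x) :
    HasSensBlocks f (s + t) := by
  refine ⟨x, Fin.append B C, fun j k hjk => ?_, Fin.addCases (by simpa) (by simpa)⟩
  induction j using Fin.addCases <;> induction k using Fin.addCases
  · simpa using hB _ _ fun h => hjk (congrArg _ h)
  · simpa using hBC _ _
  · simpa using (hBC _ _).symm
  · simpa using hC _ _ fun h => hjk (congrArg _ h)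

theorem bs_restrict_add_le {H : Finset (Fin n)} {ℓ : ℕ}
    (hblocks : ∀ z, ∃ C : Fin ℓ → Finset (Fin n), (∀ j k, j ≠ k → Disjoint (C j) (C k)) ∧
      (∀ j, C j ⊆ H) ∧ ∀ j, f (flipB z (C j)) ≠ f z) (α : Fin n → Bool) :
    bs (restrict f H α) + ℓ ≤ bs f := by
  obtain ⟨x, B, hB, hfB⟩ := hasSensBlocks_bs (restrict f H α)
  set z : Fin n → Bool := fun i => if i ∈ H then α i else x i
  obtain ⟨C, hC, hCH, hfC⟩ := hblocks z
  have hflip : ∀ j, restrict f H α (flipB x (B j)) = f (flipB z (B j \ H)) := fun j =>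
    congrArg f (funext fun i => by
      by_cases hi : i ∈ H <;> by_cases hiB : i ∈ B j <;> simp [flipB, z, *])
  refine le_bs (hasSensBlocks_add (B := fun j => B j \ H) (x := z)
    (fun j k hjk => (hB j k hjk).mono Finset.sdiff_subset Finset.sdiff_subset) hC
    (fun j k => Finset.disjoint_of_subset_right (hCH k) Finset.sdiff_disjoint)
    (fun j => ?_) hfC)
  rw [← hflip]
  exact hfB j

theorem exists_sensitive_blocks {ℱ : Finset (Finset (Fin n))}
    (hℱ : (ℱ : Set (Finset (Fin n))).PairwiseDisjoint id) {z : Fin n → Bool}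
    (h : ∀ S ∈ ℱ, ∃ B ⊆ S, f (flipB z B) ≠ f z) :
    ∃ C : Fin #ℱ → Finset (Fin n), (∀ j k, j ≠ k → Disjoint (C j) (C k)) ∧
      (∀ j, C j ⊆ ℱ.biUnion id) ∧ ∀ j, f (flipB z (C j)) ≠ f z := by
  choose B hBS hfB using h
  let e := ℱ.equivFin
  refine ⟨fun j => B _ (e.symm j).2, fun j k hjk => ?_, fun j => ?_, fun j => hfB _ _⟩
  · exact (hℱ (e.symm j).2 (e.symm k).2 fun h => hjk (e.symm.injective (Subtype.ext h))).mono
      (hBS _ _) (hBS _ _)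
  · exact (hBS _ _).trans (Finset.subset_biUnion_of_mem id (e.symm j).2)

end BlockSensitivity

/-- Multilinear real polynomials in `n` variables: `c S` is the coefficient of `∏ i ∈ S, x i`. -/
abbrev MLPoly (n : ℕ) := Finset (Fin n) → ℝ

namespace MLPoly

variable {n : ℕ}

noncomputable def eval (c : MLPoly n) (x : Fin n → Bool) : ℝ :=
  ∑ S, c S * ∏ i ∈ S, bval (x i)

noncomputable def degree (c : MLPoly n) : ℕ :=
  ({S | c S ≠ 0} : Finset (Finset (Fin n))).sup card

noncomputable def degreeAt (c : MLPoly n) (i : Fin n) : ℕ :=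
  ({S | i ∈ S ∧ c S ≠ 0} : Finset (Finset (Fin n))).sup card

noncomputable def vars (c : MLPoly n) : Finset (Fin n) :=
  {i | ∃ S, i ∈ S ∧ c S ≠ 0}

def pderiv (c : MLPoly n) (i : Fin n) : MLPoly n :=
  fun S => if i ∈ S then 0 else c (insert i S)

variable {c : MLPoly n}

theorem degree_le_iff {a : ℕ} : c.degree ≤ a ↔ ∀ S, c S ≠ 0 → #S ≤ a := by
  simp [degree]

theorem card_le_degree {S : Finset (Fin n)} (h : c S ≠ 0) : #S ≤ c.degree :=
  degree_le_iff.1 le_rfl S h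

theorem degreeAt_le_iff {i : Fin n} {a : ℕ} :
    c.degreeAt i ≤ a ↔ ∀ S, i ∈ S → c S ≠ 0 → #S ≤ a := by
  simp [degreeAt]

theorem card_le_degreeAt {i : Fin n} {S : Finset (Fin n)} (hi : i ∈ S) (h : c S ≠ 0) :
    #S ≤ c.degreeAt i :=
  degreeAt_le_iff.1 le_rfl S hi h

@[simp] theorem mem_vars {i : Fin n} : i ∈ c.vars ↔ ∃ S, i ∈ S ∧ c S ≠ 0 := by
  simp [vars]

theorem exists_card_eq_degree (h : c.degree ≠ 0) : ∃ S, c S ≠ 0 ∧ #S = c.degree := by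
  have hne : ({S | c S ≠ 0} : Finset (Finset (Fin n))).Nonempty := by
    by_contra hempty
    exact h (by rw [degree, Finset.not_nonempty_iff_eq_empty.1 hempty, Finset.sup_empty]; rfl)
  obtain ⟨S, hS, hSd⟩ := Finset.exists_mem_eq_sup _ hne Finset.card
  exact ⟨S, (Finset.mem_filter.1 hS).2, hSd.symm⟩

theorem exists_ne_zero_of_eval_ne_zero {x : Fin n → Bool} (h : c.eval x ≠ 0) :
    ∃ S, c S ≠ 0 := by
  obtain ⟨S, -, hS⟩ := Finset.exists_ne_zero_of_sum_ne_zero h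
  exact ⟨S, left_ne_zero_of_mul hS⟩

theorem eval_eq_of_forall_ne_empty (h : ∀ S, S ≠ ∅ → c S = 0) (x : Fin n → Bool) :
    c.eval x = c ∅ := by
  rw [eval, Finset.sum_eq_single ∅ (fun S _ hS => by rw [h S hS, zero_mul]) (by simp)]
  simp

theorem prod_bval_update (S : Finset (Fin n)) (x : Fin n → Bool) (i : Fin n) (v : Bool) :
    ∏ j ∈ S, bval (Function.update x i v j) =
      if i ∈ S then bval v * ∏ j ∈ S.erase i, bval (x j) else ∏ j ∈ S, bval (x j) := by
  split_ifs with hi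
  · rw [← Finset.mul_prod_erase S _ hi, Function.update_self]
    congr 1
    exact Finset.prod_congr rfl fun j hj => by
      rw [Function.update_of_ne (Finset.ne_of_mem_erase hj)]
  · exact Finset.prod_congr rfl fun j hj => by
      rw [Function.update_of_ne (ne_of_mem_of_not_mem hj hi)]

theorem eval_pderiv (i : Fin n) (x : Fin n → Bool) :
    (c.pderiv i).eval x = ∑ S with i ∈ S, c S * ∏ j ∈ S.erase i, bval (x j) := by
  rw [eval, ← Finset.sum_filter_add_sum_filter_not univ (fun S => i ∈ S)]
  rw [Finset.sum_eq_zero (fun S hS => by simp [pderiv, (Finset.mem_filter.1 hS).2]), zero_add]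
  refine Finset.sum_nbij' (insert i) (Finset.erase · i) ?_ ?_ ?_ ?_ ?_ <;>
    intro S hS <;> simp only [Finset.mem_filter, Finset.mem_univ, true_and] at hS
  · simp
  · simp
  · exact Finset.erase_insert hS
  · exact Finset.insert_erase hS
  · simp [pderiv, hS, Finset.erase_insert hS]

theorem eval_update (i : Fin n) (x : Fin n → Bool) (v : Bool) :
    c.eval (Function.update x i v) =
      c.eval (Function.update x i false) + bval v * (c.pderiv i).eval x := by
  rw [eval_pderiv]
  simp only [eval, prod_bval_update, mul_ite, Finset.sum_ite, Finset.mul_sum]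
  cases v <;> simp [bval, add_comm]

theorem pderiv_ne_zero_iff {i : Fin n} : c.pderiv i ≠ 0 ↔ i ∈ c.vars := by
  rw [mem_vars, Ne, funext_iff, not_forall]
  constructor
  · rintro ⟨S, hS⟩
    by_cases hi : i ∈ S
    · simp [pderiv, hi] at hS
    · exact ⟨insert i S, Finset.mem_insert_self i S, by simpa [pderiv, hi] using hS⟩
  · rintro ⟨S, hi, hS⟩
    exact ⟨S.erase i, by simpa [pderiv, Finset.insert_erase hi] using hS⟩

theorem degree_pderiv_le {i : Fin n} {a : ℕ} (hc : c.degree ≤ a + 1) :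
    (c.pderiv i).degree ≤ a := by
  refine degree_le_iff.2 fun S hS => ?_
  by_cases hi : i ∈ S
  · simp [pderiv, hi] at hS
  · have := degree_le_iff.1 hc (insert i S) (by simpa [pderiv, hi] using hS)
    rw [Finset.card_insert_of_notMem hi] at this
    omega

theorem card_eval_ne_zero_of_vars_eq_empty (hc : c ≠ 0) (hv : c.vars = ∅) :
    #{x | c.eval x ≠ 0} = 2 ^ n := by
  have hconst : ∀ S, S ≠ ∅ → c S = 0 := fun S hS => by
    obtain ⟨i, hi⟩ := Finset.nonempty_iff_ne_empty.2 hS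
    by_contra h
    simpa [hv] using mem_vars.2 ⟨S, hi, h⟩
  have h0 : c ∅ ≠ 0 := fun h0 =>
    hc (funext fun S => if hS : S = ∅ then hS ▸ h0 else hconst S hS)
  simp [eval_eq_of_forall_ne_empty hconst, h0]

theorem card_eval_pderiv_ne_zero_le (i : Fin n) :
    #{x | (c.pderiv i).eval x ≠ 0} ≤ 2 * #{x | c.eval x ≠ 0} := by
  set N : Finset (Fin n → Bool) := {x | c.eval x ≠ 0}
  set N' : Finset (Fin n → Bool) := {x | (c.pderiv i).eval x ≠ 0}
  -- Reset `x i` to a value at which `c` does not vanish, and remember the old value.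
  let v : (Fin n → Bool) → Bool := fun x => decide (c.eval (Function.update x i false) = 0)
  let φ : (Fin n → Bool) → (Fin n → Bool) × Bool := fun x => (Function.update x i (v x), x i)
  have hmaps : Set.MapsTo φ N' ((N ×ˢ univ : Finset ((Fin n → Bool) × Bool)) : Set _) := by
    intro x hx
    simp only [N', Finset.coe_filter, Finset.mem_univ, true_and, Set.mem_ofPred_eq] at hx
    by_cases h : c.eval (Function.update x i false) = 0
    · simpa [N, φ, v, h, eval_update (c := c) i x true, bval] using hx
    · simp [N, φ, v, h]
  have hinj : Set.InjOn φ N' := by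
    intro x _ y _ hxy
    simp only [φ, Prod.mk.injEq] at hxy
    calc x = Function.update (Function.update x i (v x)) i (x i) := by simp
      _ = Function.update (Function.update y i (v y)) i (y i) := by rw [hxy.1, hxy.2]
      _ = y := by simp
  simpa [Finset.card_product, mul_comm] using Finset.card_le_card_of_injOn φ hmaps hinj

theorem two_pow_le_card_eval_ne_zero_mul (hc : c ≠ 0) :
    2 ^ n ≤ #{x | c.eval x ≠ 0} * 2 ^ c.degree := by
  suffices h : ∀ a (c : MLPoly n), c ≠ 0 → c.degree ≤ a →
      2 ^ n ≤ #{x | c.eval x ≠ 0} * 2 ^ a from h _ c hc le_rfl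
  intro a
  induction a with
  | zero =>
    intro c hc hdeg
    have hv : c.vars = ∅ := Finset.eq_empty_of_forall_notMem fun i hi => by
      obtain ⟨S, hiS, hS⟩ := mem_vars.1 hi
      have := degree_le_iff.1 hdeg S hS
      simp_all
    simp [card_eval_ne_zero_of_vars_eq_empty hc hv]
  | succ a ih =>
    intro c hc hdeg
    obtain hv | ⟨i, hi⟩ := c.vars.eq_empty_or_nonempty
    · rw [card_eval_ne_zero_of_vars_eq_empty hc hv]
      exact Nat.le_mul_of_pos_right _ (by positivity)
    calc 2 ^ n ≤ #{x | (c.pderiv i).eval x ≠ 0} * 2 ^ a :=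
          ih _ (pderiv_ne_zero_iff.2 hi) (degree_pderiv_le hdeg)
      _ ≤ 2 * #{x | c.eval x ≠ 0} * 2 ^ a := by gcongr; exact card_eval_pderiv_ne_zero_le i
      _ = #{x | c.eval x ≠ 0} * 2 ^ (a + 1) := by ring

theorem exists_eval_ne_zero (hc : c ≠ 0) : ∃ x, c.eval x ≠ 0 := by
  by_contra! h
  have := two_pow_le_card_eval_ne_zero_mul hc
  simp [h] at this

/-- The coefficient of `x ^ S * y ^ T` once the variables in `H` are renamed `y`. -/
def slice (c : MLPoly n) (H S : Finset (Fin n)) : MLPoly n :=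
  fun T => ∑ S', if S' \ H = S ∧ S' ∩ H = T then c S' else 0

noncomputable def restrict (c : MLPoly n) (H : Finset (Fin n)) (α : Fin n → Bool) : MLPoly n :=
  fun S => (c.slice H S).eval α

variable {H : Finset (Fin n)}

theorem eval_restrict (α x : Fin n → Bool) :
    (c.restrict H α).eval x = c.eval fun i => if i ∈ H then α i else x i := by
  have hprod : ∀ S : Finset (Fin n), ∏ i ∈ S, bval (if i ∈ H then α i else x i) =
      (∏ i ∈ S ∩ H, bval (α i)) * ∏ i ∈ S \ H, bval (x i) := fun S => by
    rw [← Finset.prod_inter_mul_prod_sdiff S H]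
    congr 1 <;> refine Finset.prod_congr rfl fun i hi => ?_ <;> simp_all
  simp only [eval, restrict, slice, hprod, Finset.sum_mul, ite_mul, zero_mul]
  refine (Finset.sum_congr rfl fun S _ => Finset.sum_comm).trans ?_
  rw [Finset.sum_comm]
  refine Finset.sum_congr rfl fun S' _ => ?_
  simp [ite_and, mul_assoc]

theorem slice_sdiff_inter (S : Finset (Fin n)) : c.slice H (S \ H) (S ∩ H) = c S := by
  refine (Finset.sum_eq_single S (fun S' _ hS' => if_neg fun h => hS' ?_) (by simp)).trans
    (by simp)
  rw [← Finset.sdiff_union_inter S' H, h.1, h.2, Finset.sdiff_union_inter]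

theorem exists_of_slice_ne_zero {S T : Finset (Fin n)} (h : c.slice H S T ≠ 0) :
    ∃ S', S' \ H = S ∧ S' ∩ H = T ∧ c S' ≠ 0 := by
  obtain ⟨S', -, hS'⟩ := Finset.exists_ne_zero_of_sum_ne_zero h
  by_cases hc : S' \ H = S ∧ S' ∩ H = T
  · exact ⟨S', hc.1, hc.2, by simpa [hc] using hS'⟩
  · simp [hc] at hS'

theorem exists_of_restrict_ne_zero {α : Fin n → Bool} {S : Finset (Fin n)}
    (h : c.restrict H α S ≠ 0) : ∃ S', S' \ H = S ∧ c S' ≠ 0 := by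
  obtain ⟨T, hT⟩ := exists_ne_zero_of_eval_ne_zero h
  obtain ⟨S', hS', -, hc⟩ := exists_of_slice_ne_zero hT
  exact ⟨S', hS', hc⟩

theorem degreeAt_restrict_le (α : Fin n → Bool) (i : Fin n) :
    (c.restrict H α).degreeAt i ≤ c.degreeAt i := by
  refine degreeAt_le_iff.2 fun S hi hS => ?_
  obtain ⟨S', rfl, hS'⟩ := exists_of_restrict_ne_zero hS
  exact (Finset.card_le_card Finset.sdiff_subset).trans
    (card_le_degreeAt (Finset.sdiff_subset hi) hS')

theorem degree_restrict_le {d : ℕ} (hd : c.degree ≤ d)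
    (hmeet : ∀ S, c S ≠ 0 → #S = d → ¬Disjoint S H) (α : Fin n → Bool) :
    (c.restrict H α).degree ≤ d - 1 := by
  refine degree_le_iff.2 fun S hS => ?_
  obtain ⟨S', rfl, hS'⟩ := exists_of_restrict_ne_zero hS
  have hS'd := (card_le_degree hS').trans hd
  have hle : #(S' \ H) ≤ #S' := Finset.card_le_card Finset.sdiff_subset
  by_contra hlt
  have := Finset.eq_of_subset_of_card_le Finset.sdiff_subset (show #S' ≤ #(S' \ H) by omega)
  exact hmeet S' hS' (by omega) (Finset.sdiff_eq_self_iff_disjoint.1 this)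

theorem degree_slice_le {S : Finset (Fin n)} {i : Fin n} (hi : i ∈ S) :
    (c.slice H S).degree ≤ c.degreeAt i - #S := by
  refine degree_le_iff.2 fun T hT => ?_
  obtain ⟨S', rfl, rfl, hS'⟩ := exists_of_slice_ne_zero hT
  have := card_le_degreeAt (Finset.sdiff_subset hi) hS'
  rw [← Finset.card_sdiff_add_card_inter S' H] at this
  omega

noncomputable def weightAt (c : MLPoly n) (i : Fin n) : ℝ :=
  if i ∈ c.vars then ((2 : ℝ) ^ c.degreeAt i)⁻¹ else 0

theorem weightAt_nonneg (i : Fin n) : 0 ≤ c.weightAt i := by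
  unfold weightAt
  split_ifs <;> positivity

theorem weightAt_le_of_mem {i : Fin n} {S : Finset (Fin n)} {d : ℕ} (hi : i ∈ S)
    (hS : c S ≠ 0) (hd : d ≤ #S) : c.weightAt i ≤ ((2 : ℝ) ^ d)⁻¹ := by
  rw [weightAt, if_pos (mem_vars.2 ⟨S, hi, hS⟩)]
  exact inv_anti₀ (by positivity)
    (pow_le_pow_right₀ one_le_two (hd.trans (card_le_degreeAt hi hS)))

theorem exists_many_restrict_degreeAt_le {i : Fin n} (hi : i ∉ H) (hic : i ∈ c.vars) :
    ∃ s ≤ c.degreeAt i, ∃ N : Finset (Fin n → Bool), 2 ^ n ≤ #N * 2 ^ (c.degreeAt i - s) ∧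
      ∀ α ∈ N, i ∈ (c.restrict H α).vars ∧ (c.restrict H α).degreeAt i ≤ s := by
  obtain ⟨S, hiS, hS⟩ := mem_vars.1 hic
  have hne : ({p | i ∈ p.2 ∧ c.restrict H p.1 p.2 ≠ 0} :
      Finset ((Fin n → Bool) × Finset (Fin n))).Nonempty := by
    have : c.slice H (S \ H) ≠ 0 := fun h => hS (by rw [← c.slice_sdiff_inter (H := H) S, h]; rfl)
    obtain ⟨α, hα⟩ := exists_eval_ne_zero this
    exact ⟨(α, S \ H), Finset.mem_filter.2 ⟨Finset.mem_univ _, Finset.mem_sdiff.2 ⟨hiS, hi⟩, hα⟩⟩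
  obtain ⟨⟨α₀, S₁⟩, hmem, hmax⟩ := Finset.exists_max_image _ (fun p => #p.2) hne
  simp only [Finset.mem_filter, Finset.mem_univ, true_and] at hmem
  obtain ⟨hiS₁, hS₁⟩ := hmem
  have hslice : c.slice H S₁ ≠ 0 := fun h => hS₁ (by simp [restrict, h, eval])
  refine ⟨#S₁, (card_le_degreeAt hiS₁ hS₁).trans (degreeAt_restrict_le _ _),
    ({α | (c.slice H S₁).eval α ≠ 0} : Finset _), ?_, fun α hα => ?_⟩
  · calc 2 ^ n ≤ #{α | (c.slice H S₁).eval α ≠ 0} * 2 ^ (c.slice H S₁).degree :=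
          two_pow_le_card_eval_ne_zero_mul hslice
      _ ≤ _ := by gcongr; exacts [one_le_two, degree_slice_le hiS₁]
  · have hα' : c.restrict H α S₁ ≠ 0 := (Finset.mem_filter.1 hα).2
    exact ⟨mem_vars.2 ⟨S₁, hiS₁, hα'⟩,
      degreeAt_le_iff.2 fun S hiS hS => hmax (α, S) (by simp [hiS, hS])⟩

theorem weightAt_le_expect_restrict {i : Fin n} (hi : i ∉ H) :
    c.weightAt i ≤ 𝔼 α, (c.restrict H α).weightAt i := by
  by_cases hic : i ∈ c.vars
  swap
  · rw [weightAt, if_neg hic]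
    exact Finset.expect_nonneg fun α _ => weightAt_nonneg i
  obtain ⟨s, hst, N, hN, hNα⟩ := exists_many_restrict_degreeAt_le hi hic
  set t := c.degreeAt i
  have hlarge : (2 : ℝ) ^ n ≤ #N * 2 ^ (t - s) := by exact_mod_cast hN
  have hsplit : (2 : ℝ) ^ t = 2 ^ (t - s) * 2 ^ s := by rw [← pow_add, Nat.sub_add_cancel hst]
  calc c.weightAt i = ((2 : ℝ) ^ t)⁻¹ := if_pos hic
    _ ≤ (∑ _α ∈ N, ((2 : ℝ) ^ s)⁻¹) / 2 ^ n := by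
        rw [Finset.sum_const, nsmul_eq_mul, le_div_iff₀ (by positivity), hsplit]
        field_simp
        linarith
    _ ≤ (∑ α ∈ N, (c.restrict H α).weightAt i) / 2 ^ n := by
        gcongr with α hα
        rw [weightAt, if_pos (hNα α hα).1]
        exact inv_anti₀ (by positivity) (pow_le_pow_right₀ one_le_two (hNα α hα).2)
    _ ≤ (∑ α, (c.restrict H α).weightAt i) / 2 ^ n := by
        gcongr
        exacts [fun α _ _ => weightAt_nonneg i, N.subset_univ]
    _ = 𝔼 α, (c.restrict H α).weightAt i := by
        rw [Fintype.expect_eq_sum_div_card]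
        simp

theorem sum_compl_weightAt_le_expect (H : Finset (Fin n)) :
    ∑ i ∈ Hᶜ, c.weightAt i ≤ 𝔼 α, ∑ i, (c.restrict H α).weightAt i := by
  rw [Finset.expect_sum_comm]
  calc ∑ i ∈ Hᶜ, c.weightAt i ≤ ∑ i ∈ Hᶜ, 𝔼 α, (c.restrict H α).weightAt i :=
        Finset.sum_le_sum fun i hi => weightAt_le_expect_restrict (Finset.mem_compl.1 hi)
    _ ≤ ∑ i, 𝔼 α, (c.restrict H α).weightAt i :=
        Finset.sum_le_sum_of_subset_of_nonneg (Finset.subset_univ _)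
          fun i _ _ => Finset.expect_nonneg fun α _ => weightAt_nonneg i

theorem sum_weightAt_biUnion_le {F : Finset (Finset (Fin n))} {d : ℕ}
    (hF : ∀ S ∈ F, c S ≠ 0 ∧ #S = d) :
    ∑ i ∈ F.biUnion id, c.weightAt i ≤ #F * d * ((2 : ℝ) ^ d)⁻¹ := by
  have hcard : #(F.biUnion id) ≤ #F * d :=
    Finset.card_biUnion_le_card_mul _ _ _ fun S hS => (hF S hS).2.le
  calc ∑ i ∈ F.biUnion id, c.weightAt i ≤ ∑ _i ∈ F.biUnion id, ((2 : ℝ) ^ d)⁻¹ := by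
        refine Finset.sum_le_sum fun i hi => ?_
        obtain ⟨S, hSF, hiS⟩ := Finset.mem_biUnion.1 hi
        exact weightAt_le_of_mem hiS (hF S hSF).1 (hF S hSF).2.ge
    _ ≤ #F * d * ((2 : ℝ) ^ d)⁻¹ := by
        rw [Finset.sum_const, nsmul_eq_mul]
        gcongr
        exact_mod_cast hcard

theorem exists_top_family {d : ℕ} (hdeg : c.degree = d) (hd : 1 ≤ d) :
    ∃ F : Finset (Finset (Fin n)), 1 ≤ #F ∧ (F : Set (Finset (Fin n))).PairwiseDisjoint id ∧
      (∀ S ∈ F, c S ≠ 0 ∧ #S = d) ∧ ∀ α, (c.restrict (F.biUnion id) α).degree ≤ d - 1 := by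
  obtain ⟨F, hFtop, hFdisj, hFmeet⟩ := Finset.exists_maximal_pairwiseDisjoint_subset
    ({S | c S ≠ 0 ∧ #S = d} : Finset (Finset (Fin n)))
  have hmeet : ∀ S, c S ≠ 0 → #S = d → ∃ T ∈ F, ¬Disjoint S T := fun S hS hSd =>
    hFmeet S (by simp [hS, hSd]) (Finset.card_pos.1 (by omega))
  obtain ⟨S, hS, hSd⟩ := exists_card_eq_degree (by omega : c.degree ≠ 0)
  obtain ⟨T, hT, -⟩ := hmeet S hS (hSd.trans hdeg)
  refine ⟨F, Finset.card_pos.2 ⟨T, hT⟩, hFdisj, fun S hS => by simpa using hFtop hS,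
    degree_restrict_le hdeg.le fun S hS hSd => ?_⟩
  obtain ⟨T, hT, hST⟩ := hmeet S hS hSd
  exact fun h => hST ((Finset.disjoint_biUnion_right _ _ _).1 h T hT)

end MLPoly

section toMvPolynomial

variable {n : ℕ}

theorem monOf_apply (S : Finset (Fin n)) (j : Fin n) : monOf S j = if j ∈ S then 1 else 0 := by
  simp [monOf, Finsupp.finsetSum_apply, Finsupp.single_apply]

theorem monOf_injective : Function.Injective (monOf (n := n)) := fun S T h => by
  ext j
  have := DFunLike.congr_fun h j
  simp only [monOf_apply] at this
  split_ifs at this <;> simp_all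

theorem degree_monOf (S : Finset (Fin n)) : (monOf S).degree = #S := by
  simp [monOf]

theorem monOf_support {m : Fin n →₀ ℕ} (hm : ∀ i, m i ≤ 1) : monOf m.support = m := by
  ext j
  have := hm j
  by_cases h : m j = 0
  · simp [monOf_apply, h]
  · simp [monOf_apply, h]
    omega

namespace MLPoly

noncomputable def toMvPolynomial (c : MLPoly n) : MvPolynomial (Fin n) ℝ :=
  ∑ S, monomial (monOf S) (c S)

variable {c : MLPoly n}

theorem coeff_toMvPolynomial (m : Fin n →₀ ℕ) :
    coeff m c.toMvPolynomial = ∑ S, if monOf S = m then c S else 0 := by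
  simp [toMvPolynomial, coeff_sum, coeff_monomial]

theorem coeff_monOf_toMvPolynomial (S : Finset (Fin n)) :
    coeff (monOf S) c.toMvPolynomial = c S := by
  simp [coeff_toMvPolynomial, monOf_injective.eq_iff]

theorem support_toMvPolynomial :
    c.toMvPolynomial.support = ({S | c S ≠ 0} : Finset (Finset (Fin n))).image monOf := by
  ext m
  simp only [MvPolynomial.mem_support_iff, Finset.mem_image, Finset.mem_filter, Finset.mem_univ,
    true_and]
  constructor
  · intro h
    rw [coeff_toMvPolynomial] at h
    obtain ⟨S, -, hS⟩ := Finset.exists_ne_zero_of_sum_ne_zero h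
    split_ifs at hS with hSm
    exacts [⟨S, hS, hSm⟩, absurd rfl hS]
  · rintro ⟨S, hS, rfl⟩
    rwa [coeff_monOf_toMvPolynomial]

theorem totalDegree_toMvPolynomial : c.toMvPolynomial.totalDegree = c.degree := by
  rw [totalDegree, support_toMvPolynomial, Finset.sup_image]
  exact congrArg _ (funext degree_monOf)

theorem degI_toMvPolynomial (i : Fin n) : degI c.toMvPolynomial i = c.degreeAt i := by
  rw [degI, support_toMvPolynomial, Finset.filter_image, Finset.sup_image, degreeAt]
  congr 1
  · ext S
    simp [monOf_apply, and_comm]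
  · exact funext degree_monOf

theorem eval_toMvPolynomial (x : Fin n → Bool) :
    MvPolynomial.eval (fun i => bval (x i)) c.toMvPolynomial = c.eval x := by
  simp only [toMvPolynomial, map_sum, MvPolynomial.eval_monomial, eval]
  refine Finset.sum_congr rfl fun S _ => congrArg _ ?_
  rw [monOf, ← Finsupp.prod_finsetSum_index (fun _ => pow_zero _) (fun _ _ _ => pow_add _ _ _)]
  simp

theorem represents_toMvPolynomial {g : (Fin n → Bool) → Bool}
    (hc : ∀ x, c.eval x = bval (g x)) : Represents c.toMvPolynomial g := by
  refine ⟨fun m hm i => ?_, fun x => by rw [eval_toMvPolynomial, hc]⟩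
  rw [support_toMvPolynomial] at hm
  obtain ⟨S, -, rfl⟩ := Finset.mem_image.1 hm
  rw [monOf_apply]
  split_ifs <;> omega

theorem exists_toMvPolynomial_eq {P : MvPolynomial (Fin n) ℝ} {f : (Fin n → Bool) → Bool}
    (hP : Represents P f) :
    ∃ c : MLPoly n, c.toMvPolynomial = P ∧ ∀ x, c.eval x = bval (f x) := by
  let c : MLPoly n := fun S => coeff (monOf S) P
  have hcP : c.toMvPolynomial = P := by
    ext m
    by_cases hm : m ∈ P.support
    · rw [← monOf_support (hP.1 m hm), coeff_monOf_toMvPolynomial]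
    · rw [MvPolynomial.notMem_support_iff.1 hm, coeff_toMvPolynomial]
      refine Finset.sum_eq_zero fun S _ => ?_
      split_ifs with hSm
      · subst hSm
        exact MvPolynomial.notMem_support_iff.1 hm
      · rfl
  exact ⟨c, hcP, fun x => by rw [← eval_toMvPolynomial, hcP, hP.2]⟩

end MLPoly

end toMvPolynomial

theorem bval_injective : Function.Injective bval := by
  intro a b h
  cases a <;> cases b <;> simp_all [bval]

namespace MLPoly

variable {n : ℕ} {c : MLPoly n} {f g : (Fin n → Bool) → Bool}

theorem eval_flip1_eq_iff (x : Fin n → Bool) (i : Fin n) :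
    c.eval (flip1 x i) = c.eval x ↔ (c.pderiv i).eval x = 0 := by
  have hx := eval_update (c := c) i x (x i)
  rw [Function.update_eq_self] at hx
  rw [flip1, eval_update, hx]
  cases x i <;> simp [bval]

theorem relevant_iff_mem_vars (hc : ∀ x, c.eval x = bval (g x)) (i : Fin n) :
    Relevant g i ↔ i ∈ c.vars := by
  have key : ∀ x, g (flip1 x i) ≠ g x ↔ (c.pderiv i).eval x ≠ 0 := fun x => by
    rw [Ne, Ne, ← eval_flip1_eq_iff x i, hc, hc, bval_injective.eq_iff]
  simp only [Relevant, key, ← pderiv_ne_zero_iff]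
  exact ⟨fun ⟨x, hx⟩ h0 => hx (by simp [h0, eval]), exists_eval_ne_zero⟩

theorem W_toMvPolynomial (hc : ∀ x, c.eval x = bval (g x)) :
    W c.toMvPolynomial g = ∑ i, c.weightAt i := by
  have hrel : relSet g = c.vars := by
    ext i
    simp [relSet, relevant_iff_mem_vars hc]
  simp only [W, hrel, degI_toMvPolynomial, weightAt, Finset.sum_ite_mem, Finset.univ_inter]

theorem eval_restrict_eq_bval (hc : ∀ x, c.eval x = bval (f x)) (H : Finset (Fin n))
    (α x : Fin n → Bool) : (c.restrict H α).eval x = bval (_root_.restrict f H α x) := by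
  rw [eval_restrict, hc]
  rfl

theorem exists_sensitive_block_subset (hc : ∀ x, c.eval x = bval (f x)) {S : Finset (Fin n)}
    (hS : c S ≠ 0) (htop : c.degree ≤ #S) (hne : S.Nonempty) (z : Fin n → Bool) :
    ∃ B ⊆ S, f (flipB z B) ≠ f z := by
  have hcoeff : c.restrict Sᶜ z S = c S := by
    rw [restrict, eval_eq_of_forall_ne_empty]
    · simpa using slice_sdiff_inter (c := c) (H := Sᶜ) S
    · intro T hT
      by_contra h
      obtain ⟨S', hS'S, rfl, hS'⟩ := exists_of_slice_ne_zero h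
      have hsub : S ⊆ S' := hS'S ▸ Finset.sdiff_subset
      obtain rfl := Finset.eq_of_subset_of_card_le hsub ((card_le_degree hS').trans htop)
      simp at hT
  obtain ⟨i, hi⟩ := hne
  obtain ⟨x, hx⟩ := (relevant_iff_mem_vars (eval_restrict_eq_bval hc Sᶜ z) i).2
    (mem_vars.2 ⟨S, hi, by rwa [hcoeff]⟩)
  obtain ⟨y, hy⟩ : ∃ y, _root_.restrict f Sᶜ z y ≠ _root_.restrict f Sᶜ z z := by
    by_contra! h
    exact hx ((h _).trans (h _).symm)
  refine ⟨S.filter fun i => y i ≠ z i, Finset.filter_subset _ _, ?_⟩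
  have hflip : flipB z (S.filter fun i => y i ≠ z i) = fun i => if i ∈ Sᶜ then z i else y i :=
    funext fun i => by
      simp only [flipB, Finset.mem_filter, Finset.mem_compl]
      by_cases hi : i ∈ S <;> cases y i <;> cases z i <;> simp [hi]
  simpa [_root_.restrict, hflip] using hy

end MLPoly

theorem stmt_14_general (b d : ℕ) (hd : 1 ≤ d)
    {n : ℕ} (f : (Fin n → Bool) → Bool) (P : MvPolynomial (Fin n) ℝ)
    (hP : Represents P f) (hbs : bs f ≤ b) (hdeg : P.totalDegree = d) :
    ∃ ℓ k : ℕ, 1 ≤ ℓ ∧ ℓ ≤ b ∧ 1 ≤ k ∧ k ≤ d ∧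
      ∀ U : ℝ,
        (∀ (m : ℕ) (g : (Fin m → Bool) → Bool) (Q : MvPolynomial (Fin m) ℝ),
          Represents Q g → bs g ≤ b - ℓ → Q.totalDegree ≤ d - k → W Q g ≤ U) →
        W P f ≤ (ℓ : ℝ) * (d : ℝ) * ((2:ℝ) ^ d)⁻¹ + U := by
  obtain ⟨c, rfl, hc⟩ := MLPoly.exists_toMvPolynomial_eq hP
  rw [MLPoly.totalDegree_toMvPolynomial] at hdeg
  obtain ⟨F, hF, hFdisj, hFtop, hFdeg⟩ := c.exists_top_family hdeg hd
  set H := F.biUnion id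
  have hbsH : ∀ α, bs (restrict f H α) + #F ≤ bs f :=
    bs_restrict_add_le fun z => exists_sensitive_blocks hFdisj fun S hS =>
      c.exists_sensitive_block_subset hc (hFtop S hS).1 (by rw [hdeg, (hFtop S hS).2])
        (Finset.card_pos.1 (by rw [(hFtop S hS).2]; exact hd)) z
  refine ⟨#F, 1, hF, by linarith [hbsH fun _ => false], le_rfl, hd, fun U hU => ?_⟩
  have hcH := MLPoly.eval_restrict_eq_bval hc H
  calc W c.toMvPolynomial f = ∑ i ∈ H, c.weightAt i + ∑ i ∈ Hᶜ, c.weightAt i := by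
        rw [MLPoly.W_toMvPolynomial hc, Finset.sum_add_sum_compl]
    _ ≤ #F * d * ((2 : ℝ) ^ d)⁻¹ + 𝔼 α, ∑ i, (c.restrict H α).weightAt i :=
        add_le_add (MLPoly.sum_weightAt_biUnion_le hFtop) (MLPoly.sum_compl_weightAt_le_expect H)
    _ ≤ #F * d * ((2 : ℝ) ^ d)⁻¹ + U := by
        refine add_le_add_right (Finset.expect_le Finset.univ_nonempty fun α _ => ?_) _
        rw [← MLPoly.W_toMvPolynomial (hcH α)]
        refine hU n _ _ (MLPoly.represents_toMvPolynomial (hcH α)) ?_ ?_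
        · have := hbsH α
          omega
        · rw [MLPoly.totalDegree_toMvPolynomial]
          exact hFdeg α

/-- recursion for `W(b,d)`: for every `f` with `bs(f) ≤ b` and
`deg(f) = d` (`b, d ≥ 1`) there are `ℓ ∈ {1,…,b}` and `k ∈ {1,…,d}` such that
`W(f) ≤ ℓ·d·2^{-d} + W(b-ℓ, d-k)`, where `W(b-ℓ, d-k)` is expressed via an arbitrary
upper bound `U` on `W(g)` over all `g` with `bs(g) ≤ b-ℓ` and `deg(g) ≤ d-k`. -/
theorem stmt_14 (b d : ℕ) (hb : 1 ≤ b) (hd : 1 ≤ d)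
    {n : ℕ} (f : (Fin n → Bool) → Bool) (P : MvPolynomial (Fin n) ℝ)
    (hP : Represents P f) (hbs : bs f ≤ b) (hdeg : P.totalDegree = d) :
    ∃ ℓ k : ℕ, 1 ≤ ℓ ∧ ℓ ≤ b ∧ 1 ≤ k ∧ k ≤ d ∧
      ∀ U : ℝ,
        (∀ (m : ℕ) (g : (Fin m → Bool) → Bool) (Q : MvPolynomial (Fin m) ℝ),
          Represents Q g → bs g ≤ b - ℓ → Q.totalDegree ≤ d - k → W Q g ≤ U) →
        W P f ≤ (ℓ : ℝ) * (d : ℝ) * ((2:ℝ) ^ d)⁻¹ + U :=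
  stmt_14_general b d hd f P hP hbs hdeg
end

section
/- Define s_i(f) = max over x with f(x^i) ≠ f(x) of (s_x(f) + s_{x^i}(f)), where s_x(f) is the number of sensitive coordinates of f at x. If i ≠ j are coordinates with i relevant for f, and f_0, f_1 are the restrictions setting x_j = 0, 1, then 2^{−s_i(f)} ≤ 2^{−s_i(f_0)−1} + 2^{−s_i(f_1)−1}, with the convention that 2^{−s_i(g)} = 0 when i is irrelevant for g. -/
open MvPolynomial Finset
open scoped Classical

/-- `sx f x` : the number of sensitive coordinates of `f` at `x`. -/
noncomputable def sx {n : ℕ} (f : (Fin n → Bool) → Bool) (x : Fin n → Bool) : ℕ :=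
  (Finset.univ.filter fun k => f (flip1 x k) ≠ f x).card

/-- `sI f i = max over x with f(x^i) ≠ f(x) of (s_x(f) + s_{x^i}(f))`. -/
noncomputable def sI {n : ℕ} (f : (Fin n → Bool) → Bool) (i : Fin n) : ℕ :=
  (Finset.univ.filter fun x => f (flip1 x i) ≠ f x).sup fun x => sx f x + sx f (flip1 x i)

lemma restrict_apply' {n : ℕ} (f : (Fin n → Bool) → Bool) (j : Fin n) (b : Bool)
    (x : Fin n → Bool) :
    _root_.restrict f {j} (fun _ => b) x = f (Function.update x j b) := by
  show f _ = _
  simp only [Finset.mem_singleton]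
  congr 1
  funext m
  by_cases h : m = j <;> simp [h, Function.update_apply]

lemma flip1_update {n : ℕ} (x : Fin n → Bool) (i j : Fin n) (hij : i ≠ j) (b : Bool) :
    flip1 (Function.update x j b) i = Function.update (flip1 x i) j b := by
  funext m
  by_cases h1 : m = i <;> by_cases h2 : m = j <;>
    simp_all [flip1, Function.update_apply]

lemma sens_subset {n : ℕ} (f : (Fin n → Bool) → Bool) (i j : Fin n) (b : Bool)
    (x : Fin n → Bool) :
    (Finset.univ.filter fun k => _root_.restrict f {j} (fun _ => b) (flip1 x k) ≠
        _root_.restrict f {j} (fun _ => b) x) ⊆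
      (Finset.univ.filter fun k =>
        f (flip1 (Function.update x j b) k) ≠ f (Function.update x j b)) ∧
    j ∉ (Finset.univ.filter fun k => _root_.restrict f {j} (fun _ => b) (flip1 x k) ≠
        _root_.restrict f {j} (fun _ => b) x) := by
  constructor
  · intro k hk
    simp only [Finset.mem_filter, Finset.mem_univ, true_and] at hk ⊢
    by_cases hkj : k = j
    · exfalso
      apply hk
      subst hkj
      rw [restrict_apply', restrict_apply']
      congr 1
      simp [flip1, Function.update_idem]
    · rw [restrict_apply', restrict_apply'] at hk
      rwa [← flip1_update x k j hkj b] at hk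
  · simp only [Finset.mem_filter, Finset.mem_univ, true_and, not_not]
    rw [restrict_apply', restrict_apply']
    congr 1
    simp [flip1, Function.update_idem]

lemma sx_restrict_le {n : ℕ} (f : (Fin n → Bool) → Bool) (j : Fin n) (b : Bool)
    (x : Fin n → Bool) :
    sx (_root_.restrict f {j} (fun _ => b)) x ≤ sx f (Function.update x j b) :=
  Finset.card_le_card (sens_subset f j j b x).1

lemma sx_restrict_succ_le {n : ℕ} (f : (Fin n → Bool) → Bool) (j : Fin n) (b : Bool)
    (x : Fin n → Bool)
    (hj : f (flip1 (Function.update x j b) j) ≠ f (Function.update x j b)) :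
    sx (_root_.restrict f {j} (fun _ => b)) x + 1 ≤ sx f (Function.update x j b) := by
  obtain ⟨hsub, hnm⟩ := sens_subset f j j b x
  have h1 : insert j (Finset.univ.filter fun k => _root_.restrict f {j} (fun _ => b) (flip1 x k) ≠
      _root_.restrict f {j} (fun _ => b) x) ⊆
      (Finset.univ.filter fun k =>
        f (flip1 (Function.update x j b) k) ≠ f (Function.update x j b)) := by
    apply Finset.insert_subset _ hsub
    simp [hj]
  have h2 := Finset.card_le_card h1
  rw [Finset.card_insert_of_notMem hnm] at h2
  simp only [sx]
  omega

lemma sI_restrict_le {n : ℕ} (f : (Fin n → Bool) → Bool) (i j : Fin n) (hij : i ≠ j)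
    (b : Bool) : sI (_root_.restrict f {j} (fun _ => b)) i ≤ sI f i := by
  apply Finset.sup_le
  intro x hx
  simp only [Finset.mem_filter, Finset.mem_univ, true_and] at hx
  have hfl : _root_.restrict f {j} (fun _ => b) (flip1 x i) = f (flip1 (Function.update x j b) i) := by
    rw [restrict_apply', flip1_update x i j hij b]
  have hy : f (flip1 (Function.update x j b) i) ≠ f (Function.update x j b) := by
    have hx2 := hx
    rw [hfl, restrict_apply' f j b x] at hx2
    exact hx2
  have hle : sx f (Function.update x j b) + sx f (flip1 (Function.update x j b) i) ≤ sI f i := by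
    unfold sI
    exact Finset.le_sup (f := fun z => sx f z + sx f (flip1 z i)) (by simp [hy])
  have h1 := sx_restrict_le f j b x
  have h2 := sx_restrict_le f j b (flip1 x i)
  rw [← flip1_update x i j hij b] at h2
  omega

lemma flipj_update {n : ℕ} (x : Fin n → Bool) (j : Fin n) (b : Bool) :
    flip1 (Function.update x j b) j = Function.update x j (!b) := by
  funext m
  by_cases hm : m = j <;> simp [flip1, Function.update_apply, hm]

lemma sI_restrict_succ_le {n : ℕ} (f : (Fin n → Bool) → Bool) (i j : Fin n) (hij : i ≠ j)
    (b : Bool)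
    (hrel : Relevant (_root_.restrict f {j} (fun _ => b)) i)
    (hirr : ¬ Relevant (_root_.restrict f {j} (fun _ => !b)) i) :
    sI (_root_.restrict f {j} (fun _ => b)) i + 1 ≤ sI f i := by
  obtain ⟨x0, hx0⟩ := hrel
  have hne : (Finset.univ.filter fun x => _root_.restrict f {j} (fun _ => b) (flip1 x i) ≠
      _root_.restrict f {j} (fun _ => b) x).Nonempty := ⟨x0, by simp [hx0]⟩
  obtain ⟨x, hxmem, hsup⟩ := Finset.exists_mem_eq_sup _ hne
      (fun x => sx (_root_.restrict f {j} (fun _ => b)) x +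
        sx (_root_.restrict f {j} (fun _ => b)) (flip1 x i))
  simp only [Finset.mem_filter, Finset.mem_univ, true_and] at hxmem
  have hirr' : ∀ z, _root_.restrict f {j} (fun _ => !b) (flip1 z i) =
      _root_.restrict f {j} (fun _ => !b) z := by
    intro z
    by_contra hc
    exact hirr ⟨z, hc⟩
  have hfy : f (flip1 (Function.update x j b) i) ≠ f (Function.update x j b) := by
    have h := hxmem
    rw [restrict_apply', ← flip1_update x i j hij b, restrict_apply' f j b x] at h
    exact h
  have hc1 : f (flip1 (Function.update x j b) j) = _root_.restrict f {j} (fun _ => !b) x := by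
    rw [flipj_update]; exact (restrict_apply' f j (!b) x).symm
  have hc2 : f (flip1 (flip1 (Function.update x j b) i) j) =
      _root_.restrict f {j} (fun _ => !b) (flip1 x i) := by
    rw [flip1_update x i j hij b, flipj_update]
    exact (restrict_apply' f j (!b) (flip1 x i)).symm
  have hceq : f (flip1 (flip1 (Function.update x j b) i) j) =
      f (flip1 (Function.update x j b) j) := by
    rw [hc1, hc2, hirr' x]
  have hin : sx f (Function.update x j b) + sx f (flip1 (Function.update x j b) i) ≤ sI f i := by
    unfold sI
    exact Finset.le_sup (f := fun z => sx f z + sx f (flip1 z i)) (by simp [hfy])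
  have hgoal : sI (_root_.restrict f {j} (fun _ => b)) i =
      sx (_root_.restrict f {j} (fun _ => b)) x +
        sx (_root_.restrict f {j} (fun _ => b)) (flip1 x i) := hsup
  by_cases hcase : f (flip1 (Function.update x j b) j) = f (Function.update x j b)
  · have hj2 : f (flip1 (flip1 (Function.update x j b) i) j) ≠
        f (flip1 (Function.update x j b) i) := by
      rw [hceq, hcase]
      exact fun h => hfy h.symm
    have h2 : sx (_root_.restrict f {j} fun _ => b) (flip1 x i) + 1 ≤
        sx f (Function.update (flip1 x i) j b) :=
      sx_restrict_succ_le f j b (flip1 x i) (by rw [← flip1_update x i j hij b]; exact hj2)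
    rw [← flip1_update x i j hij b] at h2
    have h1 := sx_restrict_le f j b x
    omega
  · have h1 : sx (_root_.restrict f {j} fun _ => b) x + 1 ≤ sx f (Function.update x j b) :=
      sx_restrict_succ_le f j b x hcase
    have h2 := sx_restrict_le f j b (flip1 x i)
    rw [← flip1_update x i j hij b] at h2
    omega

lemma relevant_restrict {n : ℕ} (f : (Fin n → Bool) → Bool) (i j : Fin n) (hij : i ≠ j)
    (hi : Relevant f i) :
    Relevant (_root_.restrict f {j} fun _ => false) i ∨
      Relevant (_root_.restrict f {j} fun _ => true) i := by
  obtain ⟨x, hx⟩ := hi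
  have key : Relevant (_root_.restrict f {j} fun _ => x j) i := by
    refine ⟨x, ?_⟩
    rw [restrict_apply', restrict_apply', Function.update_eq_self]
    have hji : (flip1 x i) j = x j := by
      simp [flip1, Function.update_apply, Ne.symm hij]
    have : Function.update (flip1 x i) j (x j) = flip1 x i := by
      rw [← hji, Function.update_eq_self]
    rw [this]
    exact hx
  cases hb : x j
  · rw [hb] at key; exact Or.inl key
  · rw [hb] at key; exact Or.inr key

lemma inv_pow_le_inv_pow (a b : ℕ) (h : a ≤ b) : ((2:ℝ)^b)⁻¹ ≤ ((2:ℝ)^a)⁻¹ := by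
  gcongr
  norm_num

/-- if `i ≠ j` and `i` is relevant for `f`, then
`2^{-s_i(f)} ≤ 2^{-s_i(f_0)-1} + 2^{-s_i(f_1)-1}`, where `f_0, f_1` are the restrictions
setting `x_j = 0, 1` and `2^{-s_i(g)}` is read as `0` when `i` is irrelevant for `g`. -/
theorem stmt_16 {n : ℕ} (f : (Fin n → Bool) → Bool) (i j : Fin n) (hij : i ≠ j)
    (hi : Relevant f i)
    (f0 f1 : (Fin n → Bool) → Bool)
    (hf0 : f0 = restrict f {j} (fun _ => false))
    (hf1 : f1 = restrict f {j} (fun _ => true)) :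
    ((2:ℝ) ^ sI f i)⁻¹ ≤
      (if Relevant f0 i then ((2:ℝ) ^ sI f0 i)⁻¹ else 0) / 2 +
      (if Relevant f1 i then ((2:ℝ) ^ sI f1 i)⁻¹ else 0) / 2 := by
  subst hf0 hf1
  by_cases h0 : Relevant (_root_.restrict f {j} fun _ => false) i <;>
    by_cases h1 : Relevant (_root_.restrict f {j} fun _ => true) i
  · rw [if_pos h0, if_pos h1]
    have b0 := inv_pow_le_inv_pow _ _ (sI_restrict_le f i j hij false)
    have b1 := inv_pow_le_inv_pow _ _ (sI_restrict_le f i j hij true)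
    linarith
  · rw [if_pos h0, if_neg h1]
    have hs : sI (_root_.restrict f {j} (fun _ => false)) i + 1 ≤ sI f i :=
      sI_restrict_succ_le f i j hij false h0 h1
    have hb := inv_pow_le_inv_pow _ _ hs
    rw [pow_succ] at hb
    have he : (((2:ℝ) ^ sI (_root_.restrict f {j} fun _ => false) i) * 2)⁻¹ =
        ((2:ℝ) ^ sI (_root_.restrict f {j} fun _ => false) i)⁻¹ / 2 := by
      rw [mul_inv]; ring
    rw [he] at hb
    linarith
  · rw [if_neg h0, if_pos h1]
    have hs : sI (_root_.restrict f {j} (fun _ => true)) i + 1 ≤ sI f i :=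
      sI_restrict_succ_le f i j hij true h1 h0
    have hb := inv_pow_le_inv_pow _ _ hs
    rw [pow_succ] at hb
    have he : (((2:ℝ) ^ sI (_root_.restrict f {j} fun _ => true) i) * 2)⁻¹ =
        ((2:ℝ) ^ sI (_root_.restrict f {j} fun _ => true) i)⁻¹ / 2 := by
      rw [mul_inv]; ring
    rw [he] at hb
    linarith
  · rcases relevant_restrict f i j hij hi with h | h
    · exact absurd h h0
    · exact absurd h h1
end

section
/- For every n ≥ 1 there is no Boolean function f : {0,1}^n → {0,1} of degree 2 with block sensitivity 4; equivalently, every degree-2 Boolean function has bs(f) ≤ 3. -/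
open MvPolynomial Finset
open scoped Classical

namespace Stmt17Aux

/-! ### Symmetrization vanishing lemma -/

lemma prod_pow_bval (y : Fin 4 → Bool) (m : Fin 4 →₀ ℕ) :
    (m.prod fun j e => bval (y j) ^ e) = if ∀ j ∈ m.support, y j then 1 else 0 := by
  rw [Finsupp.prod]
  split_ifs with h
  · apply Finset.prod_eq_one
    intro j hj
    rw [h j hj]
    simp [bval]
  · push_neg at h
    obtain ⟨j, hj, hyj⟩ := h
    apply Finset.prod_eq_zero hj
    rw [Bool.eq_false_iff.mpr hyj]
    simp only [bval, if_neg Bool.false_ne_true]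
    exact zero_pow (Finsupp.mem_support_iff.mp hj)

lemma vanish (w : ℕ → ℤ)
    (hw : ∀ T : Finset (Fin 4), T.card ≤ 2 →
      (∑ y : Fin 4 → Bool, w (Finset.univ.filter fun j => y j).card *
        (if ∀ j ∈ T, y j then 1 else 0)) = 0)
    (Q : MvPolynomial (Fin 4) ℝ) (hQ : Q.totalDegree ≤ 2) :
    ∑ y : Fin 4 → Bool, (w (Finset.univ.filter fun j => y j).card : ℝ) *
      MvPolynomial.eval (fun j => bval (y j)) Q = 0 := by
  have expand : ∀ y : Fin 4 → Bool,
      (w (Finset.univ.filter fun j => y j).card : ℝ) *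
        MvPolynomial.eval (fun j => bval (y j)) Q
      = ∑ m ∈ Q.support, (w (Finset.univ.filter fun j => y j).card : ℝ) *
          MvPolynomial.eval (fun j => bval (y j)) (monomial m (Q.coeff m)) := by
    intro y
    conv_lhs => rw [Q.as_sum]
    rw [map_sum, Finset.mul_sum]
  rw [Finset.sum_congr rfl fun y _ => expand y, Finset.sum_comm]
  apply Finset.sum_eq_zero
  intro m hm
  have hcard : m.support.card ≤ 2 := by
    calc m.support.card = ∑ j ∈ m.support, 1 := by simp
    _ ≤ m.sum fun _ e => e := Finset.sum_le_sum fun j hj =>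
        Nat.one_le_iff_ne_zero.mpr (Finsupp.mem_support_iff.mp hj)
    _ ≤ Q.totalDegree := le_totalDegree hm
    _ ≤ 2 := hQ
  have hterm : ∀ y : Fin 4 → Bool,
      (w (Finset.univ.filter fun j => y j).card : ℝ) *
        MvPolynomial.eval (fun j => bval (y j)) (monomial m (Q.coeff m))
      = Q.coeff m * ((w (Finset.univ.filter fun j => y j).card : ℝ) *
          (if ∀ j ∈ m.support, y j then 1 else 0)) := by
    intro y
    rw [eval_monomial, prod_pow_bval]
    ring
  rw [Finset.sum_congr rfl fun y _ => hterm y, ← Finset.mul_sum]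
  have h0 := hw m.support hcard
  have hcast : ((∑ y : Fin 4 → Bool, w (Finset.univ.filter fun j => y j).card *
        (if ∀ j ∈ m.support, y j then 1 else 0) : ℤ) : ℝ) = 0 := by rw [h0]; norm_num
  push_cast at hcast
  rw [hcast, mul_zero]

/-! ### Substitution layer -/

section comp
variable {n : ℕ} (x : Fin n → Bool) (B : Fin 4 → Finset (Fin n))

noncomputable def subst (i : Fin n) : MvPolynomial (Fin 4) ℝ :=
  if h : ∃ j, i ∈ B j then
    C (bval (x i)) + C (1 - 2 * bval (x i)) * X h.choose
  else C (bval (x i))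

def xy (y : Fin 4 → Bool) : Fin n → Bool :=
  fun i => if ∃ j, y j ∧ i ∈ B j then !(x i) else x i

lemma eval_subst (hdisj : ∀ j k, j ≠ k → Disjoint (B j) (B k)) (y : Fin 4 → Bool) (i : Fin n) :
    MvPolynomial.eval (fun j => bval (y j)) (subst x B i) = bval (xy x B y i) := by
  unfold subst xy
  by_cases h : ∃ j, i ∈ B j
  · rw [dif_pos h]
    have hch : i ∈ B h.choose := h.choose_spec
    have huniq : ∀ j, i ∈ B j → j = h.choose := by
      intro j hj
      by_contra hne
      exact (Finset.disjoint_left.mp (hdisj j h.choose hne) hj) hch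
    simp only [map_add, map_mul, eval_C, eval_X]
    by_cases hy : y h.choose
    · have hex : ∃ j, y j ∧ i ∈ B j := ⟨h.choose, hy, hch⟩
      rw [if_pos hex, hy]
      cases hxi : x i <;> norm_num [bval]
    · have hex : ¬ ∃ j, y j ∧ i ∈ B j := by
        rintro ⟨j, hyj, hj⟩
        rw [huniq j hj] at hyj
        exact hy hyj
      rw [if_neg hex]
      simp only [bval, if_neg hy]
      ring
  · rw [dif_neg h]
    have hex : ¬ ∃ j, y j ∧ i ∈ B j := fun ⟨j, _, hj⟩ => h ⟨j, hj⟩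
    rw [if_neg hex, eval_C]

lemma subst_deg (i : Fin n) : (subst x B i).totalDegree ≤ 1 := by
  unfold subst
  split_ifs
  · refine (totalDegree_add _ _).trans
      (max_le ((totalDegree_C _).trans_le (Nat.zero_le 1)) ?_)
    refine (totalDegree_mul _ _).trans ?_
    rw [totalDegree_C, totalDegree_X, zero_add]
  · exact (totalDegree_C _).trans_le (Nat.zero_le 1)

lemma bind_deg (P : MvPolynomial (Fin n) ℝ) (hd : P.totalDegree ≤ 2) :
    (MvPolynomial.bind₁ (subst x B) P).totalDegree ≤ 2 := by
  conv_lhs => rw [P.as_sum, map_sum]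
  refine (totalDegree_finset_sum _ _).trans (Finset.sup_le fun m hm => ?_)
  rw [bind₁_monomial]
  refine (totalDegree_mul _ _).trans ?_
  rw [totalDegree_C, zero_add]
  refine (totalDegree_finset_prod _ _).trans ?_
  calc ∑ i ∈ m.support, ((subst x B i) ^ m i).totalDegree
      ≤ ∑ i ∈ m.support, m i := Finset.sum_le_sum fun i _ =>
        (totalDegree_pow _ _).trans (by
          calc m i * (subst x B i).totalDegree ≤ m i * 1 :=
            Nat.mul_le_mul_left _ (subst_deg x B i)
          _ = m i := Nat.mul_one _)
    _ = m.sum fun _ e => e := rfl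
    _ ≤ P.totalDegree := le_totalDegree hm
    _ ≤ 2 := hd

lemma eval_bind (hdisj : ∀ j k, j ≠ k → Disjoint (B j) (B k))
    (P : MvPolynomial (Fin n) ℝ) (y : Fin 4 → Bool) :
    MvPolynomial.eval (fun j => bval (y j)) (MvPolynomial.bind₁ (subst x B) P)
    = MvPolynomial.eval (fun i => bval (xy x B y i)) P := by
  have heq : ∀ (g : Fin 4 → ℝ) (q : MvPolynomial (Fin 4) ℝ),
      MvPolynomial.eval g q = eval₂ (algebraMap ℝ ℝ) g q := fun g q => rfl
  have heq' : ∀ (g : Fin n → ℝ) (q : MvPolynomial (Fin n) ℝ),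
      MvPolynomial.eval g q = eval₂ (algebraMap ℝ ℝ) g q := fun g q => rfl
  have hb := aeval_bind₁ (R := ℝ) (fun j => bval (y j)) (subst x B) P
  simp only [aeval_def] at hb
  have harg : (fun i => eval₂ (algebraMap ℝ ℝ) (fun j => bval (y j)) (subst x B i))
      = fun i => bval (xy x B y i) := by
    funext i
    rw [← heq]
    exact eval_subst x B hdisj y i
  rw [heq, hb, harg, ← heq']

lemma xy_zero : xy x B (fun _ => false) = x := by
  funext i
  unfold xy
  rw [if_neg]
  rintro ⟨j, hj, -⟩
  exact Bool.false_ne_true hj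

lemma xy_single (j0 : Fin 4) : xy x B (fun k => decide (k = j0)) = flipB x (B j0) := by
  funext i
  unfold xy flipB
  by_cases h : i ∈ B j0
  · rw [if_pos ⟨j0, by simp, h⟩, if_pos h]
  · rw [if_neg, if_neg h]
    rintro ⟨j, hj, hij⟩
    rw [decide_eq_true_iff] at hj
    exact h (hj ▸ hij)

end comp

/-! ### Finite checks -/

lemma fiber0 : (Finset.univ.filter fun y : Fin 4 → Bool =>
    (Finset.univ.filter fun j => y j).card = 0) = {fun _ => false} := by decide

lemma fiber1 : ∀ y : Fin 4 → Bool, (Finset.univ.filter fun j => y j).card = 1 →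
    ∃ j0, y = fun k => decide (k = j0) := by decide

lemma fibercard1 : (Finset.univ.filter fun y : Fin 4 → Bool =>
    (Finset.univ.filter fun j => y j).card = 1).card = 4 := by decide
lemma fibercard2 : (Finset.univ.filter fun y : Fin 4 → Bool =>
    (Finset.univ.filter fun j => y j).card = 2).card = 6 := by decide
lemma fibercard3 : (Finset.univ.filter fun y : Fin 4 → Bool =>
    (Finset.univ.filter fun j => y j).card = 3).card = 4 := by decide
lemma fibercard4 : (Finset.univ.filter fun y : Fin 4 → Bool =>
    (Finset.univ.filter fun j => y j).card = 4).card = 1 := by decide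

lemma wt_le_4 (y : Fin 4 → Bool) : (Finset.univ.filter fun j => y j).card ∈ Finset.range 5 := by
  rw [Finset.mem_range]
  exact Nat.lt_succ_of_le ((Finset.card_filter_le _ _).trans (by simp))

def w1 : ℕ → ℤ
  | 0 => -4 | 1 => 3 | 2 => -2 | 3 => 1 | _ => 0
def w2 : ℕ → ℤ
  | 0 => 0 | 1 => -1 | 2 => 2 | 3 => -3 | _ => 4

lemma hw1 : ∀ T : Finset (Fin 4), T.card ≤ 2 →
    (∑ y : Fin 4 → Bool, w1 (Finset.univ.filter fun j => y j).card *
      (if ∀ j ∈ T, y j then 1 else 0)) = 0 := by decide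
lemma hw2 : ∀ T : Finset (Fin 4), T.card ≤ 2 →
    (∑ y : Fin 4 → Bool, w2 (Finset.univ.filter fun j => y j).card *
      (if ∀ j ∈ T, y j then 1 else 0)) = 0 := by decide

/-! ### Main contradiction -/

lemma no4 {n : ℕ} (f : (Fin n → Bool) → Bool) (P : MvPolynomial (Fin n) ℝ)
    (hP : Represents P f) (hd : P.totalDegree = 2) : ¬ HasSensBlocks f 4 := by
  rintro ⟨x, B, hdisj, hsens⟩
  have hQd : (MvPolynomial.bind₁ (subst x B) P).totalDegree ≤ 2 :=
    bind_deg x B P (le_of_eq hd)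
  have hgeval : ∀ y : Fin 4 → Bool,
      MvPolynomial.eval (fun j => bval (y j)) (MvPolynomial.bind₁ (subst x B) P)
      = bval (f (xy x B y)) := by
    intro y
    rw [eval_bind x B hdisj P y, hP.2]
  have E1 := vanish w1 hw1 _ hQd
  have E2 := vanish w2 hw2 _ hQd
  simp only [hgeval] at E1 E2
  set g : (Fin 4 → Bool) → ℝ := fun y => bval (f (xy x B y)) with hgdef
  set S : ℕ → ℝ := fun k => ∑ y ∈ Finset.univ.filter
      (fun y : Fin 4 → Bool => (Finset.univ.filter fun j => y j).card = k), g y with hSdef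
  have hsplit : ∀ w : ℕ → ℤ,
      (∑ y : Fin 4 → Bool, (w (Finset.univ.filter fun j => y j).card : ℝ) * g y)
      = ∑ k ∈ Finset.range 5, (w k : ℝ) * S k := by
    intro w
    rw [← Finset.sum_fiberwise_of_maps_to
      (g := fun y : Fin 4 → Bool => (Finset.univ.filter fun j => y j).card)
      (fun y _ => wt_le_4 y)]
    apply Finset.sum_congr rfl
    intro k _
    rw [hSdef, Finset.mul_sum]
    apply Finset.sum_congr rfl
    intro y hy
    rw [Finset.mem_filter] at hy
    rw [hy.2]
  rw [hsplit] at E1 E2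
  simp only [Finset.sum_range_succ, Finset.range_zero, Finset.sum_empty, w1, w2] at E1 E2
  push_cast at E1 E2
  -- boundary values
  have hgb : ∀ y : Fin 4 → Bool, 0 ≤ g y ∧ g y ≤ 1 := by
    intro y
    simp only [hgdef, bval]
    split_ifs <;> norm_num
  have hS0 : S 0 = bval (f x) := by
    simp only [hSdef, hgdef]
    rw [fiber0, Finset.sum_singleton, xy_zero]
  have hflip : ∀ j, bval (f (flipB x (B j))) = 1 - bval (f x) := by
    intro j
    have := hsens j
    cases h1 : f (flipB x (B j)) <;> cases h2 : f x <;> simp_all [bval]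
  have hS1 : S 1 = 4 * (1 - bval (f x)) := by
    simp only [hSdef]
    have hconst : ∀ y ∈ Finset.univ.filter
        (fun y : Fin 4 → Bool => (Finset.univ.filter fun j => y j).card = 1),
        g y = 1 - bval (f x) := by
      intro y hy
      rw [Finset.mem_filter] at hy
      obtain ⟨j0, rfl⟩ := fiber1 y hy.2
      simp only [hgdef]
      show bval (f (xy x B fun k => decide (k = j0))) = 1 - bval (f x)
      rw [xy_single]
      exact hflip j0
    rw [Finset.sum_congr rfl hconst, Finset.sum_const, fibercard1, nsmul_eq_mul]
    norm_num
  have hSub : ∀ k c, (Finset.univ.filter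
      (fun y : Fin 4 → Bool => (Finset.univ.filter fun j => y j).card = k)).card = c →
      0 ≤ S k ∧ S k ≤ (c : ℝ) := by
    intro k c hc
    constructor
    · simp only [hSdef]
      exact Finset.sum_nonneg fun y _ => (hgb y).1
    · simp only [hSdef]
      rw [← hc]
      calc (∑ y ∈ Finset.univ.filter
            (fun y : Fin 4 → Bool => (Finset.univ.filter fun j => y j).card = k), g y)
          ≤ (Finset.univ.filter
            (fun y : Fin 4 → Bool => (Finset.univ.filter fun j => y j).card = k)).card • (1:ℝ) :=
            Finset.sum_le_card_nsmul _ _ 1 fun y _ => (hgb y).2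
        _ = _ := by rw [nsmul_eq_mul, mul_one]
  have h2 := hSub 2 6 fibercard2
  have h3 := hSub 3 4 fibercard3
  have h4 := hSub 4 1 fibercard4
  have hv : bval (f x) = 0 ∨ bval (f x) = 1 := by
    unfold bval
    split_ifs
    · right; rfl
    · left; rfl
  push_cast at h2 h3 h4
  rcases hv with hv | hv <;> rw [hv] at hS0 hS1 <;> linarith

lemma mono {n : ℕ} (f : (Fin n → Bool) → Bool) {b b' : ℕ}
    (h : HasSensBlocks f b) (hb : b' ≤ b) : HasSensBlocks f b' := by
  obtain ⟨x, B, hdisj, hsens⟩ := h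
  refine ⟨x, fun j => B (Fin.castLE hb j), fun j k hjk => hdisj _ _ ?_, fun j => hsens _⟩
  intro e
  exact hjk (Fin.castLE_injective hb e)

end Stmt17Aux

/-- no Boolean function of degree 2 has block sensitivity 4;
equivalently, every degree-2 Boolean function has `bs(f) ≤ 3`. -/
theorem stmt_17 {n : ℕ} (f : (Fin n → Bool) → Bool) (P : MvPolynomial (Fin n) ℝ)
    (hP : Represents P f) (hd : P.totalDegree = 2) :
    ¬ HasSensBlocks f 4 ∧ bs f ≤ 3 := by
  have h4 : ¬ HasSensBlocks f 4 := Stmt17Aux.no4 f P hP hd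
  refine ⟨h4, ?_⟩
  apply csSup_le ⟨0, ?_⟩ ?_
  · exact ⟨fun _ => false, Fin.elim0, fun j => j.elim0, fun j => j.elim0⟩
  · intro b hb
    by_contra hb3
    push_neg at hb3
    exact h4 (Stmt17Aux.mono f hb (by omega))
end
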